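/- arXiv:1405.1812 — 8 statements merged into one kernel-verified Lean document; each statement's English description precedes it below -/
import Mathlib

section
/- In any orientation of the edges of a simple graph G, there exists a directed path containing at least χ(G) vertices. -/
/-!
Choose a maximal acyclic subrelation `A` of `D`. Adding an arc `x → y` of `D` missing from `A`
would close a cycle, so `A` leads from `y` back to `x`. Hence the number of edges of a longest
`A`-chain starting at a vertex differs at the two ends of every edge of `G`: it is a proper
colouring with at most `h + 1` colours, where `h + 1` is the number of vertices of a longest
`A`-chain, itself a directed path of `D`.
-/

open SimpleGraph Relation

section

variable {α : Type*} {r : α → α → Prop}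

theorem List.IsChain.nodup_of_irrefl_transGen [Std.Irrefl (TransGen r)] {l : List α}
    (hl : l.IsChain r) : l.Nodup :=
  (hl.imp fun _ _ => TransGen.single).pairwise.nodup

namespace Relation

theorem TransGen.cases_sup_edge {x y a b : α}
    (h : TransGen (fun u v => r u v ∨ u = x ∧ v = y) a b) :
    TransGen r a b ∨ ReflTransGen r a x ∧ ReflTransGen r y b := by
  induction h with
  | single h =>
    rcases h with h | ⟨rfl, rfl⟩
    · exact .inl (.single h)
    · exact .inr ⟨.refl, .refl⟩
  | tail _ h ih =>
    rcases h with h | ⟨rfl, rfl⟩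
    · exact ih.imp (·.tail h) fun ⟨hax, hyb⟩ => ⟨hax, hyb.tail h⟩
    · exact .inr ⟨ih.elim TransGen.to_reflTransGen And.left, .refl⟩

theorem exists_acyclic_le_forall_or_reflTransGen [Finite α] (r : α → α → Prop) :
    ∃ s ≤ r, Std.Irrefl (TransGen s) ∧ ∀ x y, r x y → s x y ∨ ReflTransGen s y x := by
  obtain ⟨s, ⟨hsr, hs⟩, hmax⟩ := Set.toFinite {s | s ≤ r ∧ Std.Irrefl (TransGen s)}
    |>.exists_maximal ⟨⊥, bot_le, ⟨fun a h => by cases h <;> assumption⟩⟩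
  refine ⟨s, hsr, hs, fun x y hxy => or_iff_not_imp_left.2 fun hnot => ?_⟩
  let s' : α → α → Prop := fun u v => s u v ∨ u = x ∧ v = y
  have hs'r : s' ≤ r := fun u v h => h.elim (hsr u v) fun ⟨hu, hv⟩ => hu ▸ hv ▸ hxy
  obtain ⟨w, hw⟩ : ∃ w, TransGen s' w w := by
    by_contra! hacyc
    exact hnot <| hmax ⟨hs'r, ⟨hacyc⟩⟩ (fun _ _ => .inl) x y (.inr ⟨rfl, rfl⟩)
  rcases hw.cases_sup_edge with hw | ⟨hwx, hyw⟩
  · exact absurd hw (hs.irrefl w)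
  · exact hyw.trans hwx

section chainHeight

variable [Fintype α]

open Classical in
/-- The number of edges of a longest `r`-chain starting at `v`, capped at `card α` (the cap is
never reached when `r` is acyclic). -/
noncomputable def chainHeight (r : α → α → Prop) (v : α) : ℕ :=
  Nat.findGreatest (fun n => ∃ l : List α, (v :: l).IsChain r ∧ l.length = n) (Fintype.card α)

theorem exists_isChain_cons_length_chainHeight (r : α → α → Prop) (v : α) :
    ∃ l : List α, (v :: l).IsChain r ∧ l.length = chainHeight r v := by
  classical
  exact Nat.findGreatest_spec (P := fun n => ∃ l : List α, (v :: l).IsChain r ∧ l.length = n)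
    (Nat.zero_le _) ⟨[], List.isChain_singleton v, rfl⟩

variable [Std.Irrefl (TransGen r)]

theorem chainHeight_lt_of_rel {u v : α} (h : r u v) : chainHeight r v < chainHeight r u := by
  classical
  obtain ⟨l, hl, hlen⟩ := exists_isChain_cons_length_chainHeight r v
  have hchain : (u :: v :: l).IsChain r := List.isChain_cons_cons.2 ⟨h, hl⟩
  have hbound : l.length + 1 < Fintype.card α := by
    simpa using hchain.nodup_of_irrefl_transGen.length_le_card
  rw [← hlen]
  exact Nat.le_findGreatest hbound.le ⟨v :: l, hchain, rfl⟩

theorem chainHeight_lt_of_transGen {u v : α} (h : TransGen r u v) :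
    chainHeight r v < chainHeight r u := by
  induction h with
  | single h => exact chainHeight_lt_of_rel h
  | tail _ h ih => exact (chainHeight_lt_of_rel h).trans ih

theorem chainHeight_ne {x y : α} (hne : x ≠ y) (h : r x y ∨ ReflTransGen r y x) :
    chainHeight r x ≠ chainHeight r y := by
  rcases h with h | h
  · exact (chainHeight_lt_of_rel h).ne'
  · exact (chainHeight_lt_of_transGen ((reflTransGen_iff_eq_or_transGen.1 h).resolve_left hne)).ne

end chainHeight

end Relation

end

theorem gallai_roy_general {V : Type*} [Fintype V] (G : SimpleGraph V) (D : V → V → Prop)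
    (h_or : ∀ x y, G.Adj x y → D x y ∨ D y x) :
    ∃ l : List V, l.Nodup ∧ l.Chain' D ∧ G.chromaticNumber ≤ (l.length : ℕ∞) := by
  cases isEmpty_or_nonempty V
  · exact ⟨[], List.nodup_nil, List.isChain_nil, by simp [chromaticNumber_eq_zero_of_isEmpty]⟩
  obtain ⟨A, hAD, hA, hDA⟩ := exists_acyclic_le_forall_or_reflTransGen D
  obtain ⟨v, -, hv⟩ := Finset.univ.exists_max_image (chainHeight A) Finset.univ_nonempty
  obtain ⟨l, hl, hlen⟩ := exists_isChain_cons_length_chainHeight A v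
  refine ⟨v :: l, hl.nodup_of_irrefl_transGen, hl.imp hAD, ?_⟩
  have hcol : G.Colorable (v :: l).length := by
    refine (colorable_iff_exists_bdd_nat_coloring _).2
      ⟨Coloring.mk (chainHeight A) fun {x y} hxy => ?_, fun u => ?_⟩
    · rcases h_or x y hxy with h | h
      · exact chainHeight_ne hxy.ne (hDA x y h)
      · exact (chainHeight_ne hxy.ne.symm (hDA y x h)).symm
    · show chainHeight A u < l.length + 1
      exact hlen ▸ Nat.lt_succ_of_le (hv u (Finset.mem_univ u))
  exact hcol.chromaticNumber_le

/-- **Gallai–Roy.** In any orientation `D` of the edges of a simple graph `G`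
(each edge gets exactly one direction), there is a directed path (a list of
distinct vertices consecutively related by `D`) with at least `χ(G)` vertices. -/
theorem gallai_roy {V : Type*} [Fintype V] (G : SimpleGraph V) (D : V → V → Prop)
    (h_or : ∀ x y, G.Adj x y → D x y ∨ D y x)
    (h_sub : ∀ x y, D x y → G.Adj x y)
    (h_once : ∀ x y, D x y → ¬ D y x) :
    ∃ l : List V, l.Nodup ∧ l.Chain' D ∧ G.chromaticNumber ≤ (l.length : ℕ∞) :=
  gallai_roy_general G D h_or
end

section
/- For every finite simple graph G, the maximum number of vertices on a degree-monotone path in G is at least χ(G). -/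
/-!
Order the vertices by degree, breaking ties arbitrarily, and colour each vertex `v` by the
number of vertices on a longest path starting at `v` along which this order strictly decreases.
If `u` precedes its neighbour `v`, prefixing `v` to a longest such path from `u` shows that `v`
gets a larger colour than `u`, so the colouring is proper. Every such path is degree-monotone,
so at most `mp G` colours are used.
-/

open SimpleGraph

/-- Degree of a vertex (as `ncard` of the neighbor set, avoiding decidability). -/
noncomputable def gdeg {V : Type*} (G : SimpleGraph V) (v : V) : ℕ := (G.neighborSet v).ncard

/-- A walk is degree-monotone if the degrees along its support are monotone. -/
def DegMonotone {V : Type*} (G : SimpleGraph V) {u v : V} (p : G.Walk u v) : Prop :=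
  List.Chain' (· ≤ ·) (p.support.map (gdeg G)) ∨
  List.Chain' (fun a b => b ≤ a) (p.support.map (gdeg G))

/-- `mp G`: the maximum number of vertices on a degree-monotone path of `G`. -/
noncomputable def mp {V : Type*} [Fintype V] (G : SimpleGraph V) : ℕ :=
  sSup {n | ∃ (u v : V) (p : G.Walk u v), p.IsPath ∧ DegMonotone G p ∧ p.support.length = n}

namespace SimpleGraph

variable {V α : Type*} {G : SimpleGraph V} [LinearOrder α] (f : V → α)

theorem Walk.isPath_of_isChain_gt {u v : V} (p : G.Walk u v)
    (hp : p.support.IsChain fun a b => f b < f a) (hf : Function.Injective f) : p.IsPath := by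
  rw [Walk.isPath_def, ← List.nodup_map_iff hf]
  exact (List.isChain_iff_pairwise.1 (List.isChain_map_of_isChain f (S := (· > ·))
    (fun _ _ h => h) hp)).nodup

variable (G) in
def descentLengths (v : V) : Set ℕ :=
  {n | ∃ (w : V) (q : G.Walk v w), (q.support.IsChain fun a b => f b < f a) ∧ q.support.length = n}

theorem one_mem_descentLengths (v : V) : 1 ∈ descentLengths G f v :=
  ⟨v, Walk.nil, by simp⟩

theorem succ_mem_descentLengths {u v : V} (huv : G.Adj v u) (hf : f u < f v) {n : ℕ}
    (hn : n ∈ descentLengths G f u) : n + 1 ∈ descentLengths G f v := by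
  obtain ⟨w, q, hq, rfl⟩ := hn
  refine ⟨w, q.cons huv, ?_, by simp⟩
  rw [Walk.support_cons, ← q.cons_tail_support, List.isChain_cons_cons]
  exact ⟨hf, q.cons_tail_support ▸ hq⟩

-- Gallai–Roy for the acyclic orientation of `G` induced by `f`.
theorem colorable_of_isChain_length_le (hf : Function.Injective f) {k : ℕ}
    (hk : ∀ (u v : V) (p : G.Walk u v), (p.support.IsChain fun a b => f b < f a) →
      p.support.length ≤ k) :
    G.Colorable k := by
  have bdd (v : V) : BddAbove (descentLengths G f v) := by
    refine ⟨k, ?_⟩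
    rintro _ ⟨w, q, hq, rfl⟩
    exact hk v w q hq
  set L : V → ℕ := fun v => sSup (descentLengths G f v)
  have one_le (v : V) : 1 ≤ L v := le_csSup (bdd v) (one_mem_descentLengths f v)
  have le_k (v : V) : L v ≤ k := by
    obtain ⟨w, q, hq, hlen⟩ := Nat.sSup_mem ⟨1, one_mem_descentLengths f v⟩ (bdd v)
    calc L v = q.support.length := hlen.symm
      _ ≤ k := hk v w q hq
  have lt_of_adj {u v : V} (huv : G.Adj v u) (hf : f u < f v) : L u < L v :=
    Nat.lt_of_succ_le <| le_csSup (bdd v) <| succ_mem_descentLengths f huv hf <|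
      Nat.sSup_mem ⟨1, one_mem_descentLengths f u⟩ (bdd u)
  refine ⟨Coloring.mk (fun v => ⟨L v - 1, by have := one_le v; have := le_k v; omega⟩) ?_⟩
  intro u v huv hcol
  have hL : L u = L v := by
    have : L u - 1 = L v - 1 := congrArg Fin.val hcol
    have := one_le u; have := one_le v; omega
  rcases (hf.ne (G.ne_of_adj huv)).lt_or_gt with h | h
  · exact (lt_of_adj huv.symm h).ne hL
  · exact (lt_of_adj huv h).ne' hL

end SimpleGraph

theorem length_le_mp {V : Type*} [Fintype V] {G : SimpleGraph V} {u v : V} (p : G.Walk u v)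
    (hp : p.IsPath) (hmono : DegMonotone G p) : p.support.length ≤ mp G := by
  refine le_csSup ⟨Fintype.card V, ?_⟩ ⟨u, v, p, hp, hmono, rfl⟩
  rintro _ ⟨_, _, q, hq, _, rfl⟩
  exact hq.support_nodup.length_le_card

/-- For every finite simple graph `G`, `mp(G) ≥ χ(G)`. -/
theorem mp_ge_chromaticNumber {V : Type*} [Fintype V] (G : SimpleGraph V) :
    G.chromaticNumber ≤ (mp G : ℕ∞) := by
  let key : V → Lex (ℕ × Fin (Fintype.card V)) := fun v => toLex (gdeg G v, Fintype.equivFin V v)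
  have key_injective : Function.Injective key := fun a b h =>
    (Fintype.equivFin V).injective (congrArg (fun x => (ofLex x).2) h)
  have gdeg_le_of_key_lt {a b : V} (h : key a < key b) : gdeg G a ≤ gdeg G b := by
    rcases Prod.Lex.lt_iff.1 h with h | ⟨h, -⟩
    exacts [h.le, h.le]
  refine Colorable.chromaticNumber_le <| colorable_of_isChain_length_le key key_injective ?_
  intro u v p hp
  refine length_le_mp p (p.isPath_of_isChain_gt key hp key_injective) (Or.inr ?_)
  exact List.isChain_map_of_isChain (R := fun a b => key b < key a) (S := fun a b => b ≤ a)
    (gdeg G) (fun _ _ h => gdeg_le_of_key_lt h) hp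
end

section
/- For every k ≥ 1 and n large enough, there exists a graph G on n vertices with χ(G) = k and mp(G) = k; specifically, the complete multipartite graph with k parts of pairwise distinct sizes satisfies mp(G) = χ(G) = k. -/
/-! Take the complete multipartite graph whose parts have pairwise distinct sizes
`1, 2, …, k - 1` and `n - (1 + ⋯ + (k - 1))`. A vertex has degree `n` minus the size of its part,
so adjacent vertices (which lie in different parts) have different degrees. Along a
degree-monotone path the degrees are therefore strictly monotone, and there are only `k`
distinct degrees; conversely one vertex from each part, sorted by degree, is such a path. -/

open SimpleGraph

open Finset Function

theorem List.IsChain.and {α : Type*} {R S : α → α → Prop} {l : List α}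
    (hR : l.IsChain R) (hS : l.IsChain S) : l.IsChain fun a b => R a b ∧ S a b := by
  rw [List.isChain_iff_getElem] at hR hS ⊢
  exact fun i h => ⟨hR i h, hS i h⟩

section DegreeMonotonePaths

variable {V : Type*} {G : SimpleGraph V}

theorem DegMonotone.nodup_map_gdeg (hG : ∀ x y, G.Adj x y → gdeg G x ≠ gdeg G y)
    {u v : V} {p : G.Walk u v} (hp : DegMonotone G p) : (p.support.map (gdeg G)).Nodup := by
  have hne : (p.support.map (gdeg G)).IsChain (· ≠ ·) :=
    (List.isChain_map _).2 (p.isChain_adj_support.imp hG)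
  rcases hp with hle | hge
  · exact (List.isChain_iff_pairwise.1 <| (hle.and hne).imp
      fun _ _ h => lt_of_le_of_ne h.1 h.2).imp ne_of_lt
  · exact (List.isChain_iff_pairwise.1 <| (hge.and hne).imp
      fun _ _ h => lt_of_le_of_ne h.1 h.2.symm).imp ne_of_gt

variable [Fintype V]

theorem mp_le_card_image_gdeg (hG : ∀ x y, G.Adj x y → gdeg G x ≠ gdeg G y) :
    mp G ≤ #(univ.image (gdeg G)) := by
  refine csSup_le' ?_
  rintro _ ⟨u, v, p, -, hp, rfl⟩
  calc p.support.length = (p.support.map (gdeg G)).toFinset.card := by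
        rw [List.toFinset_card_of_nodup (hp.nodup_map_gdeg hG), List.length_map]
    _ ≤ #(univ.image (gdeg G)) := card_le_card fun d hd => by
        obtain ⟨x, -, rfl⟩ := List.mem_map.1 (List.mem_toFinset.1 hd)
        exact mem_image_of_mem _ (mem_univ x)

theorem length_le_mp_s2 {l : List V} (hne : l ≠ []) (hadj : l.IsChain G.Adj) (hnodup : l.Nodup)
    (hdeg : (l.map (gdeg G)).IsChain (· ≤ ·)) : l.length ≤ mp G := by
  have hbdd : BddAbove {n | ∃ (u v : V) (p : G.Walk u v),
      p.IsPath ∧ DegMonotone G p ∧ p.support.length = n} := by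
    refine ⟨Fintype.card V, ?_⟩
    rintro _ ⟨u, v, p, hpath, -, rfl⟩
    exact hpath.support_nodup.length_le_card
  let p := Walk.ofSupport l hne hadj
  refine le_csSup hbdd ⟨_, _, p, ?_, ?_, ?_⟩
  · rwa [Walk.isPath_def, Walk.support_ofSupport]
  · exact Or.inl (by rwa [Walk.support_ofSupport])
  · rw [Walk.support_ofSupport]

end DegreeMonotonePaths

section CompleteMultipartite

variable {V ι : Type*} {G : SimpleGraph V} {f : V → ι}

theorem gdeg_eq_card_sub_card_fiber [Fintype V] [DecidableEq ι]
    (hG : ∀ x y, G.Adj x y ↔ f x ≠ f y) (x : V) :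
    gdeg G x = Fintype.card V - #{y | f y = f x} := by
  have hnbr : G.neighborSet x = ↑({y | ¬f y = f x} : Finset V) := by
    ext y
    simp [hG, ne_comm]
  rw [gdeg, hnbr, Set.ncard_coe_finset, ← card_univ,
    ← card_filter_add_card_filter_not (s := univ) (fun y => f y = f x)]
  omega

theorem gdeg_ne_of_adj [Fintype V] [DecidableEq ι] (hG : ∀ x y, G.Adj x y ↔ f x ≠ f y)
    (hsizes : ∀ i j : ι, i ≠ j → #{x | f x = i} ≠ #{x | f x = j}) {x y : V}
    (hxy : G.Adj x y) : gdeg G x ≠ gdeg G y := by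
  have hx : #{z | f z = f x} ≤ Fintype.card V := card_le_univ _
  have hy : #{z | f z = f y} ≤ Fintype.card V := card_le_univ _
  have := hsizes _ _ ((hG x y).1 hxy)
  rw [gdeg_eq_card_sub_card_fiber hG, gdeg_eq_card_sub_card_fiber hG]
  omega

theorem chromaticNumber_eq_card_of_adj_iff [Fintype ι] (hG : ∀ x y, G.Adj x y ↔ f x ≠ f y)
    (hf : Surjective f) : G.chromaticNumber = Fintype.card ι := by
  refine le_antisymm (Coloring.mk f fun h => (hG _ _).1 h).colorable.chromaticNumber_le ?_
  refine le_chromaticNumber_of_pairwise_adj (by rw [Nat.card_eq_fintype_card]) (surjInv hf)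
    fun i j hij => ?_
  exact (hG _ _).2 (by rwa [surjInv_eq hf, surjInv_eq hf])

theorem card_le_mp [Fintype V] {k : ℕ} {f : V → Fin k} (hG : ∀ x y, G.Adj x y ↔ f x ≠ f y)
    (hf : Surjective f) : k ≤ mp G := by
  rcases Nat.eq_zero_or_pos k with rfl | hk
  · exact Nat.zero_le _
  let σ := Tuple.sort (gdeg G ∘ surjInv hf)
  let w := surjInv hf ∘ σ
  have hfw : ∀ i, f (w i) = σ i := fun i => surjInv_eq hf _
  have hadj : (List.ofFn w).IsChain G.Adj := List.isChain_ofFn.2 fun i hi => by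
    rw [hG, hfw, hfw, σ.injective.ne_iff]
    simp [Fin.ext_iff]
  have hmono : ((List.ofFn w).map (gdeg G)).IsChain (· ≤ ·) := by
    rw [List.map_ofFn, List.isChain_ofFn]
    exact fun i hi => Tuple.monotone_sort (gdeg G ∘ surjInv hf) (Fin.mk_le_mk.2 (Nat.le_succ i))
  simpa using length_le_mp_s2 (by simpa using hk.ne') hadj
    (List.nodup_ofFn.2 ((injective_surjInv hf).comp σ.injective)) hmono

theorem mp_eq_card [Fintype V] {k : ℕ} {f : V → Fin k} (hG : ∀ x y, G.Adj x y ↔ f x ≠ f y)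
    (hf : Surjective f)
    (hsizes : ∀ i j : Fin k, i ≠ j → #{x | f x = i} ≠ #{x | f x = j}) : mp G = k := by
  refine le_antisymm ?_ (card_le_mp hG hf)
  calc mp G ≤ #(univ.image (gdeg G)) := mp_le_card_image_gdeg fun x y => gdeg_ne_of_adj hG hsizes
    _ ≤ #(univ.image fun i => Fintype.card V - #{x | f x = i}) := card_le_card fun d hd => by
        obtain ⟨x, -, rfl⟩ := mem_image.1 hd
        exact mem_image.2 ⟨f x, mem_univ _, (gdeg_eq_card_sub_card_fiber hG x).symm⟩
    _ ≤ k := card_image_le.trans (by simp)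

end CompleteMultipartite

theorem exists_card_fiber_eq {ι : Type*} [Fintype ι] [DecidableEq ι] {n : ℕ} (s : ι → ℕ)
    (hn : ∑ i, s i = n) : ∃ f : Fin n → ι, ∀ i, #{x | f x = i} = s i := by
  let e : Fin n ≃ Σ i, Fin (s i) := Fintype.equivOfCardEq (by simp [hn])
  refine ⟨fun x => (e x).1, fun i => ?_⟩
  rw [← Fintype.card_subtype, Fintype.card_congr ((e.subtypeEquiv fun _ => Iff.rfl).trans
    (Equiv.sigmaSubtype i)), Fintype.card_fin]

theorem exists_pos_injective_sum_eq (m : ℕ) :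
    ∃ N, ∀ n ≥ N, ∃ s : Fin (m + 1) → ℕ, (∀ i, 0 < s i) ∧ Injective s ∧ ∑ i, s i = n := by
  let T := ∑ i : Fin m, ((i : ℕ) + 1)
  refine ⟨T + (m + 1), fun n hn => ⟨fun i => if (i : ℕ) < m then i + 1 else n - T, ?_, ?_, ?_⟩⟩
  · intro i
    dsimp only
    split <;> omega
  · intro i j hij
    have := i.isLt
    have := j.isLt
    ext
    simp only at hij
    split at hij <;> split at hij <;> omega
  · simp only [Fin.sum_univ_castSucc, Fin.val_castSucc, Fin.is_lt, ↓reduceIte, Fin.val_last,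
      lt_self_iff_false, T]
    omega

/-- For every `k ≥ 1` and all sufficiently large `n` there is a graph on `n` vertices
with `χ(G) = k` and `mp(G) = k`; specifically, a complete multipartite graph with `k`
parts of pairwise distinct sizes works. -/
theorem exists_mp_eq_chromaticNumber (k : ℕ) (hk : 1 ≤ k) :
    ∃ N : ℕ, ∀ n ≥ N, ∃ (G : SimpleGraph (Fin n)) (f : Fin n → Fin k),
      (∀ x y, G.Adj x y ↔ f x ≠ f y) ∧
      Function.Surjective f ∧
      (∀ i j : Fin k, i ≠ j →
        (Finset.univ.filter fun x => f x = i).card ≠ (Finset.univ.filter fun x => f x = j).card) ∧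
      G.chromaticNumber = (k : ℕ∞) ∧ mp G = k := by
  obtain ⟨m, rfl⟩ := Nat.exists_eq_add_of_le' hk
  obtain ⟨N, hN⟩ := exists_pos_injective_sum_eq m
  refine ⟨N, fun n hn => ?_⟩
  obtain ⟨s, hs_pos, hs_inj, hs_sum⟩ := hN n hn
  obtain ⟨f, hf⟩ := exists_card_fiber_eq s hs_sum
  let G : SimpleGraph (Fin n) := (⊤ : SimpleGraph (Fin (m + 1))).comap f
  have hG : ∀ x y, G.Adj x y ↔ f x ≠ f y := fun _ _ => Iff.rfl
  have hsurj : Surjective f := fun i => by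
    obtain ⟨x, hx⟩ := card_pos.1 ((hf i).symm ▸ hs_pos i)
    exact ⟨x, (mem_filter.1 hx).2⟩
  have hsizes : ∀ i j : Fin (m + 1), i ≠ j → #{x | f x = i} ≠ #{x | f x = j} := by
    simpa only [hf] using fun i j => hs_inj.ne
  exact ⟨G, f, hG, hsurj, hsizes, by simpa using chromaticNumber_eq_card_of_adj_iff hG hsurj,
    mp_eq_card hG hsurj hsizes⟩
end

section
/- For every finite simple graph G on n vertices, mp(G) ≥ n / α(G), where α(G) is the independence number. -/
open SimpleGraph

/-- The independence number: the maximum size of an independent set of vertices. -/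
noncomputable def indepNum {V : Type*} [Fintype V] (G : SimpleGraph V) : ℕ :=
  sSup {n | ∃ s : Finset V, (∀ x ∈ s, ∀ y ∈ s, ¬ G.Adj x y) ∧ s.card = n}

/-!
Refine the degree preorder to a strict total order and label every vertex with the number of
vertices of a longest path starting there along which this order increases. If `u` is adjacent to
`v` and below it, a longest increasing path from `v` extends to one from `u`, so adjacent vertices
get different labels. The labels are therefore a proper colouring with at most `mp(G)` colours,
since increasing paths are degree-monotone; each colour class is independent, so `n ≤ mp(G) α(G)`.
-/

open Finset Function

theorem indepNum_eq_simpleGraph_indepNum {V : Type*} [Fintype V] (G : SimpleGraph V) :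
    _root_.indepNum G = G.indepNum := by
  unfold _root_.indepNum SimpleGraph.indepNum
  congr 1
  ext n
  refine exists_congr fun s => ⟨fun ⟨hs, hn⟩ => ⟨fun x hx y hy _ => hs x hx y hy, hn⟩,
    fun ⟨hs, hn⟩ => ⟨fun x hx y hy hxy => ?_, hn⟩⟩
  exact hs hx hy hxy.ne hxy

namespace SimpleGraph

variable {V : Type*} {G : SimpleGraph V}

theorem Colorable.card_le_mul_indepNum [Fintype V] {k : ℕ} (hk : G.Colorable k) :
    Fintype.card V ≤ k * G.indepNum := by
  classical
  obtain ⟨C⟩ := hk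
  calc Fintype.card V = #(univ : Finset V) := rfl
    _ ≤ G.indepNum * #(univ : Finset (Fin k)) :=
      card_le_mul_card_image_of_maps_to (fun _ _ => mem_univ _) _ fun c _ => by
        apply IsIndepSet.card_le_indepNum
        simpa [Coloring.colorClass] using C.isIndepSet_colorClass c
    _ = k * G.indepNum := by rw [card_univ, Fintype.card_fin, mul_comm]

theorem Walk.IsPath.length_support_le_card [Fintype V] {u v : V} {p : G.Walk u v}
    (hp : p.IsPath) : p.support.length ≤ Fintype.card V := by
  rw [Walk.length_support]
  exact hp.length_lt

section Rising

variable {α : Type*} [LinearOrder α] {r : V → α}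

theorem Walk.isPath_of_isChain_lt {u v : V} {p : G.Walk u v}
    (hp : (p.support.map r).IsChain (· < ·)) : p.IsPath :=
  (Walk.isPath_def p).2 <|
    ((List.isChain_iff_pairwise.1 hp).imp ne_of_lt).of_map r fun _ _ => ne_of_apply_ne r

variable (G r)

def risingLengths (v : V) : Set ℕ :=
  {n | ∃ (u : V) (p : G.Walk v u), (p.support.map r).IsChain (· < ·) ∧ p.support.length = n}

noncomputable def risingHeight (v : V) : ℕ := sSup (G.risingLengths r v)

variable {G r}

theorem one_mem_risingLengths (v : V) : 1 ∈ G.risingLengths r v :=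
  ⟨v, .nil, List.isChain_singleton _, rfl⟩

variable [Fintype V]

theorem bddAbove_risingLengths (v : V) : BddAbove (G.risingLengths r v) := by
  refine ⟨Fintype.card V, ?_⟩
  rintro _ ⟨u, p, hp, rfl⟩
  exact (Walk.isPath_of_isChain_lt hp).length_support_le_card

theorem risingHeight_mem_risingLengths (v : V) : G.risingHeight r v ∈ G.risingLengths r v :=
  Nat.sSup_mem ⟨1, one_mem_risingLengths v⟩ (bddAbove_risingLengths v)

theorem one_le_risingHeight (v : V) : 1 ≤ G.risingHeight r v :=
  le_csSup (bddAbove_risingLengths v) (one_mem_risingLengths v)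

theorem risingHeight_lt_of_adj {u v : V} (huv : G.Adj u v) (hr : r u < r v) :
    G.risingHeight r v < G.risingHeight r u := by
  obtain ⟨w, p, hp, hlen⟩ := risingHeight_mem_risingLengths (G := G) (r := r) v
  have hext : G.risingHeight r v + 1 ∈ G.risingLengths r u := by
    refine ⟨w, .cons huv p, ?_, by simp [hlen]⟩
    rw [← p.cons_tail_support, List.map_cons] at hp
    rw [Walk.support_cons, ← p.cons_tail_support, List.map_cons, List.map_cons]
    exact List.isChain_cons_cons.2 ⟨hr, hp⟩
  exact le_csSup (bddAbove_risingLengths u) hext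

theorem risingHeight_ne_of_adj (hr : Injective r) {u v : V} (huv : G.Adj u v) :
    G.risingHeight r u ≠ G.risingHeight r v := by
  rcases (hr.ne huv.ne).lt_or_gt with hlt | hgt
  · exact (risingHeight_lt_of_adj huv hlt).ne'
  · exact (risingHeight_lt_of_adj huv.symm hgt).ne

theorem colorable_of_risingHeight_le (hr : Injective r) {k : ℕ}
    (hk : ∀ v, G.risingHeight r v ≤ k) : G.Colorable k := by
  refine ⟨Coloring.mk (fun v => ⟨G.risingHeight r v - 1, ?_⟩) fun {u v} huv heq => ?_⟩
  · have := one_le_risingHeight (G := G) (r := r) v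
    have := hk v
    omega
  · have := one_le_risingHeight (G := G) (r := r) u
    have := one_le_risingHeight (G := G) (r := r) v
    exact risingHeight_ne_of_adj hr huv (by simp only [Fin.mk.injEq] at heq; omega)

end Rising

end SimpleGraph

section DegreeMonotone

variable {V : Type*} [Fintype V] (G : SimpleGraph V)

theorem bddAbove_mp_lengths : BddAbove {n | ∃ (u v : V) (p : G.Walk u v),
    p.IsPath ∧ DegMonotone G p ∧ p.support.length = n} := by
  refine ⟨Fintype.card V, ?_⟩
  rintro _ ⟨u, v, p, hp, -, rfl⟩
  exact hp.length_support_le_card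

noncomputable def degreeKey (v : V) : ℕ ×ₗ Fin (Fintype.card V) :=
  toLex (gdeg G v, Fintype.equivFin V v)

theorem degreeKey_injective : Injective (degreeKey G) := fun _ _ h =>
  (Fintype.equivFin V).injective (congrArg Prod.snd (toLex.injective h))

theorem risingHeight_degreeKey_le_mp (v : V) : G.risingHeight (degreeKey G) v ≤ mp G := by
  obtain ⟨u, p, hp, hlen⟩ := risingHeight_mem_risingLengths (G := G) (r := degreeKey G) v
  refine le_csSup (bddAbove_mp_lengths G) ⟨v, u, p, Walk.isPath_of_isChain_lt hp, .inl ?_, hlen⟩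
  show List.IsChain _ _
  rw [List.isChain_map] at hp ⊢
  exact hp.imp fun a b (h : degreeKey G a < degreeKey G b) => Prod.Lex.monotone_fst _ _ h.le

end DegreeMonotone

/-- For every finite simple graph `G` on `n` vertices, `mp(G) ≥ n / α(G)`. -/
theorem mp_ge_card_div_indepNum {V : Type*} [Fintype V] (G : SimpleGraph V) :
    (Fintype.card V : ℝ) / (_root_.indepNum G : ℝ) ≤ (mp G : ℝ) := by
  have hcol : G.Colorable (mp G) :=
    colorable_of_risingHeight_le (degreeKey_injective G) (risingHeight_degreeKey_le_mp G)
  have hcard := hcol.card_le_mul_indepNum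
  rw [← indepNum_eq_simpleGraph_indepNum] at hcard
  exact div_le_of_le_mul₀ (by positivity) (by positivity) (by exact_mod_cast hcard)
end

section
/- If G is a connected graph on at least 3 vertices with mp(G) = 2 and xy is an edge with deg(x) > deg(y), then every neighbour u of y satisfies deg(u) > deg(y), and every neighbour w of x satisfies deg(w) < deg(x). -/
open SimpleGraph

section

variable {V : Type*} [Fintype V] (G : SimpleGraph V)

theorem length_support_le_mp {u v : V} {p : G.Walk u v} (hp : p.IsPath)
    (hmono : DegMonotone G p) : p.support.length ≤ mp G := by
  have hbdd : BddAbove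
      {n | ∃ (u v : V) (q : G.Walk u v), q.IsPath ∧ DegMonotone G q ∧ q.support.length = n} :=
    ⟨Fintype.card V, fun _ ⟨_, _, q, hq, _, hlen⟩ => hlen ▸ hq.support_nodup.length_le_card⟩
  exact le_csSup hbdd ⟨u, v, p, hp, hmono, rfl⟩

theorem three_le_mp_of_adj_of_adj {a b c : V} (hab : G.Adj a b) (hbc : G.Adj b c) (hac : a ≠ c)
    (hba : gdeg G b ≤ gdeg G a) (hcb : gdeg G c ≤ gdeg G b) : 3 ≤ mp G := by
  let p : G.Walk a c := .cons hab (.cons hbc .nil)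
  have hpath : p.IsPath := by
    simp [p, Walk.isPath_def, hab.ne, hbc.ne, hac]
  have hmono : DegMonotone G p :=
    .inr (.cons_cons hba (.cons_cons hcb (.singleton _)))
  exact length_support_le_mp G hpath hmono

end

theorem nbhd_degrees_of_mp_eq_two_general {V : Type*} [Fintype V] (G : SimpleGraph V)
    (hmp : mp G = 2)
    (x y : V) (hxy : G.Adj x y) (hdeg : gdeg G y < gdeg G x) :
    (∀ u, G.Adj y u → gdeg G y < gdeg G u) ∧ (∀ w, G.Adj x w → gdeg G w < gdeg G x) := by
  constructor
  · intro u hyu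
    by_contra! hu
    have hxu : x ≠ u := by rintro rfl; omega
    have := three_le_mp_of_adj_of_adj G hxy hyu hxu hdeg.le hu
    omega
  · intro w hxw
    by_contra! hw
    have hwy : w ≠ y := by rintro rfl; omega
    have := three_le_mp_of_adj_of_adj G hxw.symm hxy hwy hw hdeg.le
    omega

/-- If `G` is connected on at least `3` vertices with `mp(G) = 2` and `xy` is an edge
with `deg(x) > deg(y)`, then every neighbour of `y` has degree `> deg(y)` and every
neighbour of `x` has degree `< deg(x)`. -/
theorem nbhd_degrees_of_mp_eq_two {V : Type*} [Fintype V] (G : SimpleGraph V)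
    (hconn : G.Connected) (hcard : 3 ≤ Fintype.card V) (hmp : mp G = 2)
    (x y : V) (hxy : G.Adj x y) (hdeg : gdeg G y < gdeg G x) :
    (∀ u, G.Adj y u → gdeg G y < gdeg G u) ∧ (∀ w, G.Adj x w → gdeg G w < gdeg G x) :=
  nbhd_degrees_of_mp_eq_two_general G hmp x y hxy hdeg
end

section
/- A connected graph G on n ≥ 3 vertices satisfies mp(G) = 2 if and only if G is bipartite with bipartition V(G) = A ∪ B such that every vertex x ∈ A satisfies deg(x) > deg(y) for all neighbours y of x. -/
/-!
A degree-monotone path on more than two vertices starts with one on exactly three, so, as soon as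
`G` has an edge, `mp G = 2` says that no path `a - b - c` has `gdeg a ≤ gdeg b ≤ gdeg c`.
Given the bipartition, either `b ∈ A` or `a ∈ A`, and either way one of the two inequalities fails.
Conversely, without such triples an edge `xy` with `gdeg x = gdeg y` would be a whole component,
which connectedness and `3 ≤ card V` exclude; and if `gdeg x < gdeg y` then `y` beats all its
neighbours while `x` does not. So the vertices beating all their neighbours form `A`.
-/

open SimpleGraph

namespace SimpleGraph

variable {V : Type*} (G : SimpleGraph V)

/-- No path `a - b - c` on three vertices has `gdeg a ≤ gdeg b ≤ gdeg c` (read backwards, this also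
excludes decreasing ones). -/
def NoDegMonotoneTriple : Prop :=
  ∀ ⦃a b c : V⦄, G.Adj a b → G.Adj b c → a ≠ c → gdeg G a ≤ gdeg G b → gdeg G c < gdeg G b

variable {G}

theorem degMonotone_iff {u v : V} (p : G.Walk u v) :
    DegMonotone G p ↔ (p.support.map (gdeg G)).IsChain (· ≤ ·) ∨
      (p.support.map (gdeg G)).IsChain (fun a b => b ≤ a) :=
  Iff.rfl

theorem NoDegMonotoneTriple.neighborSet_eq_singleton (hG : G.NoDegMonotoneTriple) {x y : V}
    (hxy : G.Adj x y) (hdeg : gdeg G x = gdeg G y) : G.neighborSet x = {y} := by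
  refine Set.eq_singleton_iff_unique_mem.2 ⟨hxy, fun w hxw => ?_⟩
  by_contra hwy
  rcases le_total (gdeg G w) (gdeg G x) with hle | hle
  · exact (hG hxw.symm hxy hwy hle).not_ge hdeg.le
  · exact (hG hxy.symm hxw (Ne.symm hwy) hdeg.ge).not_ge hle

theorem NoDegMonotoneTriple.gdeg_lt_of_adj (hG : G.NoDegMonotoneTriple) {x y z : V}
    (hxy : G.Adj x y) (hlt : gdeg G x < gdeg G y) (hyz : G.Adj y z) : gdeg G z < gdeg G y := by
  rcases eq_or_ne x z with rfl | hxz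
  · exact hlt
  · exact hG hxy hyz hxz hlt.le

theorem card_le_two_of_neighborSet_eq_singleton (hG : G.Preconnected) [Fintype V] {x y : V}
    (hx : G.neighborSet x = {y}) (hy : G.neighborSet y = {x}) : Fintype.card V ≤ 2 := by
  classical
  have hxy : ∀ z, z ∈ ({x, y} : Set V) := by
    intro z
    by_contra hz
    obtain ⟨d, -, hd, hd'⟩ := (hG x z).some.exists_boundary_dart _ (by simp) hz
    have hadj : d.snd ∈ G.neighborSet d.fst := d.adj
    rcases hd with hd | hd <;> rw [hd] at hadj <;> simp_all
  calc Fintype.card V = (Finset.univ : Finset V).card := rfl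
    _ ≤ ({x, y} : Finset V).card := Finset.card_le_card fun z _ => by simpa using hxy z
    _ ≤ 2 := Finset.card_le_two

theorem NoDegMonotoneTriple.gdeg_ne_of_adj (hG : G.NoDegMonotoneTriple) (hconn : G.Preconnected)
    [Fintype V] (hcard : 3 ≤ Fintype.card V) {x y : V} (hxy : G.Adj x y) :
    gdeg G x ≠ gdeg G y := fun hdeg =>
  (card_le_two_of_neighborSet_eq_singleton hconn (hG.neighborSet_eq_singleton hxy hdeg)
    (hG.neighborSet_eq_singleton hxy.symm hdeg.symm)).not_gt hcard

theorem NoDegMonotoneTriple.exists_bipartition (hG : G.NoDegMonotoneTriple)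
    (hconn : G.Preconnected) [Fintype V] (hcard : 3 ≤ Fintype.card V) :
    ∃ A : Set V, (∀ x y, G.Adj x y → (x ∈ A ↔ y ∉ A)) ∧
      (∀ x ∈ A, ∀ y, G.Adj x y → gdeg G y < gdeg G x) := by
  set A := {x | ∀ y, G.Adj x y → gdeg G y < gdeg G x}
  have hA : ∀ x y, G.Adj x y → gdeg G x < gdeg G y → x ∉ A ∧ y ∈ A := fun x y hxy hlt =>
    ⟨fun hx => (hx y hxy).asymm hlt, fun _ => hG.gdeg_lt_of_adj hxy hlt⟩
  refine ⟨A, fun x y hxy => ?_, fun x hx => hx⟩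
  rcases (hG.gdeg_ne_of_adj hconn hcard hxy).lt_or_gt with hlt | hlt
  · simp [hA x y hxy hlt]
  · simp [hA y x hxy.symm hlt]

theorem noDegMonotoneTriple_of_bipartition {A : Set V} (hA : ∀ x y, G.Adj x y → (x ∈ A ↔ y ∉ A))
    (hdeg : ∀ x ∈ A, ∀ y, G.Adj x y → gdeg G y < gdeg G x) : G.NoDegMonotoneTriple := by
  intro a b c hab hbc _ hle
  by_cases hb : b ∈ A
  · exact hdeg b hb c hbc
  · exact absurd hle (hdeg a ((hA a b hab).2 hb) b hab).not_ge

theorem NoDegMonotoneTriple.length_support_le_two (hG : G.NoDegMonotoneTriple) {u v : V}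
    {p : G.Walk u v} (hp : p.IsPath) (hm : DegMonotone G p) : p.support.length ≤ 2 := by
  match p, hp, hm with
  | .nil, _, _ => simp
  | .cons _ .nil, _, _ => simp
  | .cons hab (.cons (v := c) hbc q), hp, hm =>
    have hac : u ≠ c := fun h => (Walk.cons_isPath_iff _ _).1 hp |>.2 (by simp [h])
    rw [degMonotone_iff, Walk.support_cons, Walk.support_cons, ← Walk.cons_tail_support q] at hm
    simp only [List.map_cons, List.isChain_cons_cons] at hm
    rcases hm with ⟨h₁, h₂, -⟩ | ⟨h₁, h₂, -⟩
    · exact absurd h₂ (hG hab hbc hac h₁).not_ge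
    · exact absurd h₁ (hG hbc.symm hab.symm hac.symm h₂).not_ge

variable [Fintype V]

theorem le_mp {u v : V} {p : G.Walk u v} (hp : p.IsPath) (hm : DegMonotone G p) :
    p.support.length ≤ mp G := by
  refine le_csSup ⟨Fintype.card V, ?_⟩ ⟨u, v, p, hp, hm, rfl⟩
  rintro n ⟨u, v, p, hp, -, rfl⟩
  exact hp.support_nodup.length_le_card

theorem two_le_mp {x y : V} (hxy : G.Adj x y) : 2 ≤ mp G := by
  refine le_mp (p := .cons hxy .nil) (by simp [hxy.ne]) ?_
  rcases le_total (gdeg G x) (gdeg G y) with hle | hle <;> simp [degMonotone_iff, hle]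

theorem mp_le_two_iff : mp G ≤ 2 ↔ G.NoDegMonotoneTriple := by
  refine ⟨fun hmp a b c hab hbc hac hle => ?_, fun hG => csSup_le' ?_⟩
  · by_contra! hge
    have := le_mp (p := .cons hab (.cons hbc .nil)) (by simp [hab.ne, hbc.ne, hac])
      (by simp [degMonotone_iff, hle, hge])
    simp at this
    omega
  · rintro n ⟨u, v, p, hp, hm, rfl⟩
    exact hG.length_support_le_two hp hm

end SimpleGraph

/-- A connected graph `G` on `n ≥ 3` vertices has `mp(G) = 2` iff `G` is bipartite
with bipartition `A ∪ Aᶜ` such that every vertex of `A` has degree strictly larger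
than all of its neighbours. -/
theorem mp_eq_two_iff {V : Type*} [Fintype V] (G : SimpleGraph V)
    (hconn : G.Connected) (hcard : 3 ≤ Fintype.card V) :
    mp G = 2 ↔ ∃ A : Set V,
      (∀ x y, G.Adj x y → (x ∈ A ↔ y ∉ A)) ∧
      (∀ x ∈ A, ∀ y, G.Adj x y → gdeg G y < gdeg G x) := by
  have : Nontrivial V := Fintype.one_lt_card_iff_nontrivial.1 (by omega)
  obtain ⟨y, hxy⟩ := hconn.preconnected.exists_adj_of_nontrivial (Classical.arbitrary V)
  rw [← (two_le_mp hxy).ge_iff_eq', mp_le_two_iff]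
  exact ⟨fun hG => hG.exists_bipartition hconn.preconnected hcard,
    fun ⟨_, hA, hdeg⟩ => noDegMonotoneTriple_of_bipartition hA hdeg⟩
end

section
/- Let F_n (the fan) be the graph obtained from the cycle C_n (n ≥ 5) by adding all chords from one fixed vertex v. Then F_n is maximal outerplanar and mp(F_n) = n − 1. -/
/-!
Only the vertices `1` and `n - 1` of the fan have degree `2`; every other vertex has degree at
least `3`. Along a degree-monotone path the vertices of small degree come first and
consecutively, so such a path cannot contain both of these two non-adjacent vertices and misses a
vertex; the path `1, 2, …, n - 2, 0` shows that `n - 1` vertices are reached. The degree sum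
`4n - 6` gives the `2n - 3` edges of a triangulated polygon.
-/

open SimpleGraph

/-- `IsMOP G`: `G` on `Fin n` is a triangulated polygon on the Hamiltonian cycle
`0 - 1 - ⋯ - (n-1) - 0`: it contains all cycle edges, no two of its edges cross,
and it has `2n - 3` edges (so all its inner faces are triangles). Every maximal
outerplanar graph on `n ≥ 3` vertices is isomorphic to such a graph. -/
structure IsMOP {n : ℕ} (G : SimpleGraph (Fin n)) : Prop where
  three_le : 3 ≤ n
  cycle : ∀ i j : Fin n, (j : ℕ) = ((i : ℕ) + 1) % n → G.Adj i j
  noncross : ∀ a b c d : Fin n, a < b → b < c → c < d → G.Adj a c → G.Adj b d → False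
  card_edges : G.edgeSet.ncard = 2 * n - 3

section DegreeMonotone

variable {V : Type*} {G : SimpleGraph V}

lemma adj_of_isChain_of_mem {β : Type*} [LinearOrder β] {f : V → β} {l : List V}
    (hadj : l.IsChain G.Adj) (hmono : (l.map f).IsChain (· ≤ ·)) {a b : V} {d : β}
    (hab : a ≠ b) (ha : f a ≤ d) (hb : f b ≤ d) (hsmall : ∀ w, f w ≤ d → w = a ∨ w = b)
    (hal : a ∈ l) (hbl : b ∈ l) : G.Adj a b := by
  match l, hadj, hmono with
  | [], _, _ => simp at hal
  | [x], _, _ => simp_all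
  | x :: y :: t, hadj, hmono =>
    have hxy : G.Adj x y := (List.isChain_cons_cons.mp hadj).1
    obtain ⟨hx_le, hy_le, -⟩ : (∀ w ∈ y :: t, f x ≤ f w) ∧ (∀ w ∈ t, f y ≤ f w) ∧ _ := by
      simpa only [List.pairwise_cons, List.pairwise_map] using
        List.isChain_iff_pairwise.mp hmono
    -- the values `≤ d` come first in a sorted list, so `a` and `b` are its first two entries
    have hxy_small : ∀ z, z = x ∨ z = y → z = a ∨ z = b := by
      rintro z hz
      by_contra hzab
      have hdz : d < f z := lt_of_not_ge (hzab ∘ hsmall z)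
      have hz_le : ∀ w ∈ t, f z ≤ f w := by
        rcases hz with rfl | rfl
        exacts [fun w hw => hx_le w (.tail _ hw), hy_le]
      have hnot : ∀ w ∈ t, f w ≤ d → False := fun w hw hwd =>
        (hdz.trans_le (hz_le w hw)).not_ge hwd
      grind
    rcases hxy_small x (.inl rfl) with rfl | rfl <;> rcases hxy_small y (.inr rfl) with rfl | rfl <;>
      simp_all [G.adj_comm]

lemma DegMonotone.adj_of_mem_support {u v : V} {p : G.Walk u v} (hp : DegMonotone G p)
    {a b : V} {d : ℕ} (hab : a ≠ b) (ha : gdeg G a ≤ d) (hb : gdeg G b ≤ d)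
    (hsmall : ∀ w, gdeg G w ≤ d → w = a ∨ w = b) (hap : a ∈ p.support)
    (hbp : b ∈ p.support) : G.Adj a b := by
  rcases hp with hinc | hdec
  · exact adj_of_isChain_of_mem p.isChain_adj_support hinc hab ha hb hsmall hap hbp
  · refine adj_of_isChain_of_mem p.reverse.isChain_adj_support ?_ hab ha hb hsmall
      (by simpa using hap) (by simpa using hbp)
    rwa [Walk.support_reverse, List.map_reverse, List.isChain_reverse]

variable [Fintype V]

lemma SimpleGraph.Walk.IsPath.length_support_lt_card {u v : V} {p : G.Walk u v}
    (hp : p.IsPath) {w : V} (hw : w ∉ p.support) : p.support.length < Fintype.card V := by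
  classical
  rw [← List.toFinset_card_of_nodup hp.support_nodup]
  exact Finset.card_lt_univ_of_notMem (by simpa using hw)

lemma DegMonotone.length_support_lt_card {u v : V} {p : G.Walk u v} (hp : DegMonotone G p)
    (hpath : p.IsPath) {a b : V} {d : ℕ} (hab : a ≠ b) (hnadj : ¬ G.Adj a b)
    (ha : gdeg G a ≤ d) (hb : gdeg G b ≤ d) (hsmall : ∀ w, gdeg G w ≤ d → w = a ∨ w = b) :
    p.support.length < Fintype.card V := by
  by_cases hap : a ∈ p.support
  · exact hpath.length_support_lt_card fun hbp =>
      hnadj (hp.adj_of_mem_support hab ha hb hsmall hap hbp)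
  · exact hpath.length_support_lt_card hap

lemma two_mul_ncard_edgeSet_eq_sum_gdeg (G : SimpleGraph V) :
    2 * G.edgeSet.ncard = ∑ v, gdeg G v := by
  classical
  simp only [gdeg, ← Nat.card_coe_set_eq, Nat.card_eq_fintype_card, card_neighborSet_eq_degree,
    sum_degrees_eq_twice_card_edges, card_edgeSet]

end DegreeMonotone

-- The closing cycle edge `{n - 1, 0}` is one of the chords at `0`.
def fan (n : ℕ) : SimpleGraph (Fin n) :=
  SimpleGraph.fromRel fun i j => (i : ℕ) = 0 ∨ (j : ℕ) = i + 1

section Fan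

variable {n : ℕ}

lemma fan_adj {i j : Fin n} : (fan n).Adj i j ↔
    (i : ℕ) ≠ j ∧ ((i : ℕ) = 0 ∨ (j : ℕ) = 0 ∨ (j : ℕ) = i + 1 ∨ (i : ℕ) = j + 1) := by
  rw [fan, fromRel_adj, Ne, Fin.ext_iff]
  tauto

lemma succ_val_mod_eq (i : Fin n) : ((i : ℕ) + 1) % n = if (i : ℕ) + 1 = n then 0 else (i : ℕ) + 1 := by
  split_ifs with h
  · rw [h, Nat.mod_self]
  · exact Nat.mod_eq_of_lt (by omega)

lemma eq_fan {G : SimpleGraph (Fin n)} (hG : ∀ i j : Fin n, G.Adj i j ↔ i ≠ j ∧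
      ((i : ℕ) = 0 ∨ (j : ℕ) = 0 ∨ (j : ℕ) = ((i : ℕ) + 1) % n ∨ (i : ℕ) = ((j : ℕ) + 1) % n)) :
    G = fan n := by
  ext i j
  rw [hG, fan_adj, succ_val_mod_eq, succ_val_mod_eq, Ne, Fin.ext_iff]
  split_ifs <;> omega

lemma gdeg_fan (hn : 3 ≤ n) (v : Fin n) : gdeg (fan n) v =
    if (v : ℕ) = 0 then n - 1 else if (v : ℕ) = 1 ∨ (v : ℕ) = n - 1 then 2 else 3 := by
  have hv := v.isLt
  split_ifs with h0 h1
  · have : (fan n).neighborSet v = {v}ᶜ := by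
      ext w
      simp only [mem_neighborSet, fan_adj, Set.mem_compl_iff, Set.mem_singleton_iff, Fin.ext_iff]
      omega
    rw [gdeg, this, Set.ncard_compl, Set.ncard_singleton, Nat.card_eq_fintype_card,
      Fintype.card_fin]
  · rw [gdeg, Set.ncard_eq_two]
    rcases h1 with h1 | h1 <;>
      [refine ⟨⟨0, by omega⟩, ⟨2, by omega⟩, ?_, ?_⟩;
       refine ⟨⟨0, by omega⟩, ⟨n - 2, by omega⟩, ?_, ?_⟩] <;>
      simp only [Ne, Fin.ext_iff, Set.ext_iff, mem_neighborSet, fan_adj, Set.mem_insert_iff,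
        Set.mem_singleton_iff] <;>
      omega
  · rw [gdeg, Set.ncard_eq_three]
    refine ⟨⟨0, by omega⟩, ⟨v - 1, by omega⟩, ⟨v + 1, by omega⟩, ?_, ?_, ?_, ?_⟩ <;>
      simp only [Ne, Fin.ext_iff, Set.ext_iff, mem_neighborSet, fan_adj, Set.mem_insert_iff,
        Set.mem_singleton_iff] <;>
      omega

lemma gdeg_fan_le_two_iff (hn : 4 ≤ n) (v : Fin n) :
    gdeg (fan n) v ≤ 2 ↔ (v : ℕ) = 1 ∨ (v : ℕ) = n - 1 := by
  rw [gdeg_fan (by omega)]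
  split_ifs <;> omega

lemma sum_gdeg_fan (hn : 3 ≤ n) : ∑ v, gdeg (fan n) v = 4 * n - 6 := by
  obtain ⟨m, rfl⟩ : ∃ m, n = m + 3 := ⟨n - 3, by omega⟩
  let g : ℕ → ℕ := fun k => if k = 0 then m + 3 - 1 else if k = 1 ∨ k = m + 3 - 1 then 2 else 3
  have hmid : ∀ k ∈ Finset.range m, g (k + 1 + 1) = 3 := fun k hk => by
    rw [Finset.mem_range] at hk
    simp only [g]
    rw [if_neg (by omega), if_neg (by omega)]
  calc ∑ v, gdeg (fan (m + 3)) v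
      = ∑ k ∈ Finset.range (m + 3), g k := by
        simp only [gdeg_fan hn]
        exact Fin.sum_univ_eq_sum_range g _
    _ = ∑ k ∈ Finset.range m, g (k + 1 + 1) + g 1 + g 0 + g (m + 2) := by
        rw [Finset.sum_range_succ, Finset.sum_range_succ', Finset.sum_range_succ']
    _ = 4 * (m + 3) - 6 := by
        have h0 : g 0 = m + 2 := if_pos rfl
        have h1 : g 1 = 2 := by simp [g]
        have hlast : g (m + 2) = 2 := by simp [g]
        rw [Finset.sum_congr rfl hmid, Finset.sum_const, Finset.card_range, smul_eq_mul, h0, h1,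
          hlast]
        omega

lemma isMOP_fan (hn : 3 ≤ n) : IsMOP (fan n) where
  three_le := hn
  cycle i j hij := by
    rw [succ_val_mod_eq] at hij
    rw [fan_adj]
    split_ifs at hij <;> omega
  noncross a b c d hab hbc hcd hac hbd := by
    rw [fan_adj] at hac hbd
    rw [Fin.lt_def] at hab hbc hcd
    omega
  card_edges := by
    have := two_mul_ncard_edgeSet_eq_sum_gdeg (fan n)
    rw [sum_gdeg_fan hn] at this
    omega

lemma exists_degMonotone_path_fan (hn : 4 ≤ n) : ∃ (u v : Fin n) (p : (fan n).Walk u v),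
    p.IsPath ∧ DegMonotone (fan n) p ∧ p.support.length = n - 1 := by
  -- `f` lists `1, 2, …, n - 2, 0`, whose degrees are `2, 3, …, 3, n - 1`
  let f : ℕ → Fin n := fun k => ⟨(k + 1) % (n - 1), (Nat.mod_lt _ (by omega)).trans (by omega)⟩
  have hf : ∀ k < n - 1, (f k : ℕ) = if k = n - 2 then 0 else k + 1 := fun k hk => by
    split_ifs with h
    · simp only [f, h, show n - 2 + 1 = n - 1 by omega, Nat.mod_self]
    · exact Nat.mod_eq_of_lt (by omega)
  have hrange : n - 1 = (n - 2) + 1 := by omega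
  have hchain : ((List.range (n - 1)).map f).IsChain (fan n).Adj := by
    rw [List.isChain_map, hrange, List.isChain_range_succ]
    intro m hm
    rw [fan_adj, hf m (by omega), hf (m + 1) (by omega)]
    split_ifs <;> omega
  have hne : (List.range (n - 1)).map f ≠ [] := by
    rw [Ne, List.map_eq_nil_iff, List.range_eq_nil]
    omega
  let p := Walk.ofSupport _ hne hchain
  refine ⟨_, _, p, ?_, .inl (?_ : List.IsChain _ _), by simp [p]⟩
  · rw [Walk.isPath_def, Walk.support_ofSupport]
    refine List.nodup_range.map_on fun k hk l hl hkl => ?_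
    rw [List.mem_range] at hk hl
    have := congrArg Fin.val hkl
    rw [hf k hk, hf l hl] at this
    split_ifs at this <;> omega
  · rw [Walk.support_ofSupport, List.map_map, List.isChain_map, hrange, List.isChain_range_succ]
    intro m hm
    simp only [Function.comp_apply]
    rw [gdeg_fan (by omega), gdeg_fan (by omega), hf m (by omega), hf (m + 1) (by omega)]
    split_ifs <;> omega

lemma mp_fan (hn : 4 ≤ n) : mp (fan n) = n - 1 := by
  refine IsGreatest.csSup_eq ⟨exists_degMonotone_path_fan hn, ?_⟩
  rintro k ⟨u, v, p, hpath, hp, rfl⟩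
  let a : Fin n := ⟨1, by omega⟩
  let b : Fin n := ⟨n - 1, by omega⟩
  have hab : a ≠ b := by simp only [a, b, Ne, Fin.ext_iff]; omega
  have hnadj : ¬ (fan n).Adj a b := by simp only [a, b, fan_adj]; omega
  have hsmall : ∀ w, gdeg (fan n) w ≤ 2 → w = a ∨ w = b := fun w hw => by
    simpa only [a, b, Fin.ext_iff] using (gdeg_fan_le_two_iff hn w).1 hw
  have hlt := hp.length_support_lt_card hpath hab hnadj
    ((gdeg_fan_le_two_iff hn a).2 (.inl rfl)) ((gdeg_fan_le_two_iff hn b).2 (.inr rfl)) hsmall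
  rw [Fintype.card_fin] at hlt
  omega

end Fan

/-- The fan `F_n` (`n ≥ 5`), the cycle `C_n` together with all chords from the fixed
vertex `0`, is maximal outerplanar and satisfies `mp(F_n) = n − 1`. -/
theorem fan_is_mop_and_mp {n : ℕ} (hn : 5 ≤ n) (G : SimpleGraph (Fin n))
    (hfan : ∀ i j : Fin n, G.Adj i j ↔ i ≠ j ∧
      ((i : ℕ) = 0 ∨ (j : ℕ) = 0 ∨ (j : ℕ) = ((i : ℕ) + 1) % n ∨ (i : ℕ) = ((j : ℕ) + 1) % n)) :
    IsMOP G ∧ mp G = n - 1 := by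
  obtain rfl := eq_fan hfan
  exact ⟨isMOP_fan (by omega), mp_fan (by omega)⟩
end

section
/- For every graph G on n vertices, mp(G) + mp(Ḡ) ≥ 2√n, where Ḡ is the complement of G. -/
open SimpleGraph

/-!
Rank the vertices by degree, breaking ties injectively. Colouring each vertex by the number of
vertices of the longest path descending from it in this ranking is a proper colouring (the
Gallai–Roy argument), and such paths are degree-monotone, so `G` is `mp G`-colourable. Any two
distinct vertices are adjacent in `G` or in `Gᶜ`, so pairing a colouring of `G` with one of `Gᶜ`
is injective, whence `n ≤ mp G * mp Gᶜ`, and AM–GM gives `2√n ≤ mp G + mp Gᶜ`.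
-/

namespace SimpleGraph

variable {V : Type*} {G : SimpleGraph V}

section DescendingPaths

variable {α : Type*} [LinearOrder α] (G) (f : V → α)

def descPathLengths (v : V) : Set ℕ :=
  {n | ∃ (w : V) (p : G.Walk v w), p.IsPath ∧
    p.support.IsChain (fun a b => f b < f a) ∧ p.support.length = n}

noncomputable def maxDescPathLength (v : V) : ℕ := sSup (G.descPathLengths f v)

lemma one_mem_descPathLengths (v : V) : 1 ∈ G.descPathLengths f v :=
  ⟨v, .nil, .nil, List.isChain_singleton v, rfl⟩

lemma bddAbove_descPathLengths [Fintype V] (v : V) : BddAbove (G.descPathLengths f v) :=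
  ⟨Fintype.card V, by
    rintro n ⟨w, p, hp, -, rfl⟩
    exact hp.support_nodup.length_le_card⟩

lemma one_le_maxDescPathLength [Fintype V] (v : V) : 1 ≤ G.maxDescPathLength f v :=
  le_csSup (G.bddAbove_descPathLengths f v) (G.one_mem_descPathLengths f v)

variable {G f}

lemma le_of_mem_support_of_isChain {v w x : V} {p : G.Walk v w}
    (hc : p.support.IsChain (fun a b => f b < f a)) (hx : x ∈ p.support) : f x ≤ f v := by
  have : IsTrans V (fun a b => f b < f a) := ⟨fun _ _ _ hab hbc => hbc.trans hab⟩
  rw [← p.cons_tail_support] at hc hx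
  rcases List.mem_cons.mp hx with rfl | hx
  · exact le_rfl
  · exact ((List.pairwise_cons.mp (List.isChain_iff_pairwise.mp hc)).1 x hx).le

lemma maxDescPathLength_lt_of_adj [Fintype V] {u v : V} (h : G.Adj u v) (hf : f v < f u) :
    G.maxDescPathLength f v < G.maxDescPathLength f u := by
  obtain ⟨w, p, hp, hc, hl⟩ := Nat.sSup_mem ⟨1, G.one_mem_descPathLengths f v⟩
    (G.bddAbove_descPathLengths f v)
  have hu : u ∉ p.support := fun hu => (le_of_mem_support_of_isChain hc hu).not_gt hf
  have hmem : G.maxDescPathLength f v + 1 ∈ G.descPathLengths f u := by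
    refine ⟨w, .cons h p, (Walk.cons_isPath_iff h p).mpr ⟨hp, hu⟩, ?_, ?_⟩
    · refine hc.cons fun y hy => ?_
      rw [← p.cons_tail_support, List.head?_cons, Option.mem_some_iff] at hy
      exact hy ▸ hf
    · rw [Walk.support_cons, List.length_cons, hl]; rfl
  exact Nat.lt_of_succ_le (le_csSup (G.bddAbove_descPathLengths f u) hmem)

theorem colorable_of_descPath_length_le [Fintype V] (hf : ∀ ⦃u v⦄, G.Adj u v → f u ≠ f v)
    {N : ℕ} (hN : ∀ (v w : V) (p : G.Walk v w), p.IsPath →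
      p.support.IsChain (fun a b => f b < f a) → p.support.length ≤ N) :
    G.Colorable N := by
  have hle : ∀ v, G.maxDescPathLength f v ≤ N := fun v =>
    csSup_le ⟨1, G.one_mem_descPathLengths f v⟩
      fun _ ⟨w, p, hp, hc, hl⟩ => hl ▸ hN v w p hp hc
  refine (colorable_iff_exists_bdd_nat_coloring N).mpr
    ⟨Coloring.mk (fun v => G.maxDescPathLength f v - 1) fun {u v} h => ?_, fun v => ?_⟩
  · have hu := G.one_le_maxDescPathLength f u
    have hv := G.one_le_maxDescPathLength f v
    rcases (hf h).lt_or_gt with huv | hvu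
    · have := maxDescPathLength_lt_of_adj h.symm huv
      omega
    · have := maxDescPathLength_lt_of_adj h hvu
      omega
  · have := G.one_le_maxDescPathLength f v
    have := hle v
    simp only [Coloring.mk, RelHom.coeFn_mk]
    omega

end DescendingPaths

lemma bddAbove_monotonePathLengths [Fintype V] (G : SimpleGraph V) : BddAbove
    {n | ∃ (u v : V) (p : G.Walk u v), p.IsPath ∧ DegMonotone G p ∧ p.support.length = n} :=
  ⟨Fintype.card V, by
    rintro n ⟨u, v, p, hp, -, rfl⟩
    exact hp.support_nodup.length_le_card⟩

lemma length_support_le_mp [Fintype V] {u v : V} {p : G.Walk u v} (hp : p.IsPath)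
    (hm : DegMonotone G p) :
    p.support.length ≤ mp G :=
  le_csSup G.bddAbove_monotonePathLengths ⟨u, v, p, hp, hm, rfl⟩

theorem colorable_mp [Fintype V] (G : SimpleGraph V) : G.Colorable (mp G) := by
  let f : V → ℕ ×ₗ Fin (Fintype.card V) := fun v => toLex (gdeg G v, Fintype.equivFin V v)
  refine colorable_of_descPath_length_le (f := f) (fun u v huv hf => ?_) fun v w p hp hc => ?_
  · exact huv.ne ((Fintype.equivFin V).injective (congrArg (fun x => (ofLex x).2) hf))
  · refine length_support_le_mp hp (Or.inr ?_)
    exact List.isChain_map_of_isChain (gdeg G)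
      (fun a b hab => Prod.Lex.monotone_fst _ _ hab.le) hc

theorem card_le_mul_of_colorable_compl [Fintype V] {a b : ℕ} (hG : G.Colorable a)
    (hGc : Gᶜ.Colorable b) :
    Fintype.card V ≤ a * b := by
  obtain ⟨C⟩ := hG
  obtain ⟨D⟩ := hGc
  have hinj : Function.Injective fun v => (C v, D v) := by
    intro u v huv
    by_contra hne
    by_cases h : G.Adj u v
    · exact C.valid h (congrArg Prod.fst huv)
    · exact D.valid ⟨hne, h⟩ (congrArg Prod.snd huv)
  simpa using Fintype.card_le_of_injective _ hinj

end SimpleGraph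

lemma Real.two_mul_sqrt_le_add {x a b : ℝ} (ha : 0 ≤ a) (hb : 0 ≤ b) (h : x ≤ a * b) :
    2 * √x ≤ a + b :=
  calc 2 * √x ≤ 2 * (√a * √b) := by rw [← Real.sqrt_mul ha]; gcongr
    _ ≤ √a ^ 2 + √b ^ 2 := by rw [← mul_assoc]; exact two_mul_le_add_sq _ _
    _ = a + b := by rw [Real.sq_sqrt ha, Real.sq_sqrt hb]

/-- Nordhaus–Gaddum lower bound: `mp(G) + mp(Ḡ) ≥ 2√n`. -/
theorem mp_add_mp_compl_ge {V : Type*} [Fintype V] (G : SimpleGraph V) :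
    2 * Real.sqrt (Fintype.card V) ≤ (mp G : ℝ) + (mp Gᶜ : ℝ) :=
  Real.two_mul_sqrt_le_add (Nat.cast_nonneg _) (Nat.cast_nonneg _) <| by
    exact_mod_cast card_le_mul_of_colorable_compl G.colorable_mp Gᶜ.colorable_mp
end
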